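/- Let H be a connected multigraph in which every vertex has multidegree at least 3, let G be a multigraph, and let G′ be a subdivision of G. If (φ, ψ) is an H-immersion model in G′, then no branch vertex of (φ, ψ) (i.e., no vertex in the image of φ) is a subdivision vertex, and consequently G′ contains H as an immersion if and only if G contains H as an immersion. -/

import Mathlib

open scoped Classical

/-- A finite loopless multigraph: `E` indexes edges, `ends e` gives the endpoints. -/
structure Multigraph (V : Type) (E : Type) where
  ends : E → Sym2 V
  loopless : ∀ e, ¬ (ends e).IsDiag

namespace Multigraph

variable {V E V1 E1 V2 E2 : Type}

/-- Multidegree: number of edges (with multiplicity) incident with `v`. -/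
noncomputable def mdeg (G : Multigraph V E) [Fintype E] (v : V) : ℕ :=
  (Finset.univ.filter (fun e => v ∈ G.ends e)).card

/-- Walks in a multigraph, remembering which edge instance is used at each step. -/
inductive Walk (G : Multigraph V E) : V → V → Type where
  | nil (v : V) : Walk G v v
  | cons {u v w : V} (e : E) (he : G.ends e = s(u, v)) (p : Walk G v w) : Walk G u w

namespace Walk

variable {G : Multigraph V E}

def support : {u v : V} → G.Walk u v → List V
  | u, _, .nil _ => [u]
  | u, _, .cons _ _ p => u :: p.support

def edges : {u v : V} → G.Walk u v → List E
  | _, _, .nil _ => []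
  | _, _, .cons e _ p => e :: p.edges

/-- A walk is a path when its vertices are pairwise distinct. -/
def IsPath {u v : V} (p : G.Walk u v) : Prop := p.support.Nodup

/-- The internal vertices of a walk (all vertices except the two endpoints). -/
def interior {u v : V} (p : G.Walk u v) : List V := p.support.tail.dropLast

end Walk

/-- An `H`-immersion model in `G`. -/
structure ImmersionModel (H : Multigraph V1 E1) (G : Multigraph V E) where
  vmap : V1 → V
  vmap_inj : Function.Injective vmap
  src : E1 → V1
  tgt : E1 → V1
  ends_eq : ∀ e, H.ends e = s(src e, tgt e)
  path : ∀ e, G.Walk (vmap (src e)) (vmap (tgt e))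
  path_isPath : ∀ e, (path e).IsPath
  edge_disjoint : ∀ e₁ e₂, e₁ ≠ e₂ → ∀ x, x ∈ (path e₁).edges → x ∉ (path e₂).edges

namespace ImmersionModel

variable {H : Multigraph V1 E1} {G : Multigraph V E}

/-- The edges of the immersion expansion associated with the model. -/
def edgeSet (m : ImmersionModel H G) : Set E := {x | ∃ e, x ∈ (m.path e).edges}

/-- The vertices of the immersion expansion associated with the model. -/
def vertSet (m : ImmersionModel H G) : Set V :=
  {x | (∃ a, m.vmap a = x) ∨ ∃ e, x ∈ (m.path e).support}

end ImmersionModel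

/-- `G` contains `H` as an immersion. -/
def Immersed (H : Multigraph V1 E1) (G : Multigraph V E) : Prop :=
  Nonempty (ImmersionModel H G)

/-- Deleting a set of edges from a multigraph. -/
def deleteEdges (G : Multigraph V E) (F : Set E) : Multigraph V {e : E // e ∉ F} where
  ends e := G.ends e.1
  loopless e := G.loopless e.1

/-- The minimum size of an `H`-cover of `G`: a set of edges meeting every
`H`-immersion expansion. (By convention `sInf ∅ = 0`.) -/
noncomputable def coverNum (H : Multigraph V1 E1) (G : Multigraph V E) : ℕ :=
  sInf {n | ∃ C : Finset E, ¬ Immersed H (G.deleteEdges ↑C) ∧ C.card = n}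

/-- The maximum size of an `H`-packing in `G`: a collection of pairwise
edge-disjoint `H`-immersion expansions. -/
noncomputable def packNum (H : Multigraph V1 E1) (G : Multigraph V E) : ℕ :=
  sSup {n | ∃ f : Fin n → ImmersionModel H G,
    ∀ i j, i ≠ j → Disjoint (f i).edgeSet (f j).edgeSet}

/-- Connectivity of a multigraph. -/
def Connected (G : Multigraph V E) : Prop :=
  Nonempty V ∧ ∀ u v : V, Nonempty (G.Walk u v)

/-- Reachability in `G` avoiding the vertex set `X`. -/
def ReachAvoid (G : Multigraph V E) (X : Set V) (u v : V) : Prop :=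
  ∃ p : G.Walk u v, ∀ x ∈ p.support, x ∉ X

/-- The underlying simple graph of a multigraph. -/
def toSimple (G : Multigraph V E) : SimpleGraph V where
  Adj u v := u ≠ v ∧ ∃ e, G.ends e = s(u, v)
  symm := ⟨by
    rintro u v ⟨h, e, he⟩
    exact ⟨h.symm, e, by rw [he, Sym2.eq_swap]⟩⟩
  loopless := ⟨fun v h => h.1 rfl⟩

end Multigraph

section Minor

/-- `A` is a minor of `B` (branch-set/minor-model definition). -/
def SimpleGraphMinorOf {α β : Type} (A : SimpleGraph α) (B : SimpleGraph β) : Prop :=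
  ∃ C : α → Set β,
    (∀ a, (C a).Nonempty) ∧
    (∀ a, (B.induce (C a)).Connected) ∧
    (Pairwise fun a a' => Disjoint (C a) (C a')) ∧
    (∀ a a', A.Adj a a' → ∃ x ∈ C a, ∃ y ∈ C a', B.Adj x y)

end Minor

namespace Multigraph

variable {V E : Type}

/-- Planarity of a loopless multigraph, via Wagner's theorem: no `K₅` and
no `K₃,₃` minor in the underlying simple graph. -/
def Planar (G : Multigraph V E) : Prop :=
  ¬ SimpleGraphMinorOf (SimpleGraph.completeGraph (Fin 5)) G.toSimple ∧
  ¬ SimpleGraphMinorOf (completeBipartiteGraph (Fin 3) (Fin 3)) G.toSimple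

lemma isDiag_map_inl {α β : Type} (p : Sym2 α) :
    (p.map (Sum.inl : α → α ⊕ β)).IsDiag ↔ p.IsDiag := by
  induction p using Sym2.ind with
  | _ a b => simp

/-- `G⁺`: attach to every vertex `v` a gadget of two new vertices `(v,false)`,
`(v,true)` joined by a double edge, each joined to `v` by a single edge. -/
def plus (G : Multigraph V E) :
    Multigraph (V ⊕ (V × Bool)) (E ⊕ ((V × Fin 2) ⊕ (V × Bool))) where
  ends
    | .inl e => (G.ends e).map .inl
    | .inr (.inl (v, _)) => s(.inr (v, false), .inr (v, true))
    | .inr (.inr (v, b)) => s(.inl v, .inr (v, b))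
  loopless := by
    rintro (e | ⟨v, i⟩ | ⟨v, b⟩) h
    · exact G.loopless e ((isDiag_map_inl _).1 h)
    · simp at h
    · simp at h

/-- `G*`: attach, at every vertex `v` and for every `i ∈ {1,…,mdeg v}`, a gadget of two
new vertices joined by a double edge, each joined to `v` by a single edge. -/
noncomputable def star (G : Multigraph V E) [Fintype E] :
    Multigraph (V ⊕ ((Σ v : V, Fin (G.mdeg v)) × Bool))
      (E ⊕ (((Σ v : V, Fin (G.mdeg v)) × Fin 2) ⊕ ((Σ v : V, Fin (G.mdeg v)) × Bool))) where
  ends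
    | .inl e => (G.ends e).map .inl
    | .inr (.inl (p, _)) => s(.inr (p, false), .inr (p, true))
    | .inr (.inr (p, b)) => s(.inl p.1, .inr (p, b))
  loopless := by
    rintro (e | ⟨p, i⟩ | ⟨p, b⟩) h
    · exact G.loopless e ((isDiag_map_inl _).1 h)
    · simp at h
    · simp at h

/-- The subdivision of `G` in which the edge `e` (oriented from `src e` to `tgt e`)
is subdivided `n e` times, i.e. replaced by a path with `n e` internal vertices. -/
def subdivide (G : Multigraph V E) (src tgt : E → V)
    (hst : ∀ e, G.ends e = s(src e, tgt e)) (n : E → ℕ) :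
    Multigraph (V ⊕ (Σ e : E, Fin (n e))) (Σ e : E, Fin (n e + 1)) where
  ends := fun q =>
    s(if _ : q.2.val = 0 then Sum.inl (src q.1)
        else Sum.inr ⟨q.1, ⟨q.2.val - 1, by have := q.2.isLt; omega⟩⟩,
      if _ : q.2.val = n q.1 then Sum.inl (tgt q.1)
        else Sum.inr ⟨q.1, ⟨q.2.val, by have := q.2.isLt; omega⟩⟩)
  loopless := by
    rintro ⟨e, i⟩ h
    rw [Sym2.mk_isDiag_iff] at h
    split_ifs at h with h1 h2 h2 <;>
      first
        | exact Sum.noConfusion h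
        | (have hl := G.loopless e
           rw [hst e, Sym2.mk_isDiag_iff] at hl
           exact hl (Sum.inl.inj h))
        | (have h3 := congrArg (fun s => s.2.val) (Sum.inr.inj h)
           simp only at h1 h3 <;> omega)

end Multigraph

namespace Multigraph

/-- The multigraph underlying a simple graph. -/
def ofSimple {α : Type} (S : SimpleGraph α) : Multigraph α S.edgeSet where
  ends e := e.1
  loopless e := S.not_isDiag_of_mem_edgeSet e.2

/-- A strong immersion model: additionally, no branch vertex is an internal
vertex of a certifying path. -/
structure StrongImmersionModel {V1 E1 V E : Type} (H : Multigraph V1 E1) (G : Multigraph V E)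
    extends ImmersionModel H G where
  not_internal : ∀ (e : E1) (x : V1), vmap x ∉ (path e).interior

/-- An `H`-topological-minor model in `G`: certifying paths are internally
vertex-disjoint and their internal vertices avoid the branch vertices. -/
structure TopMinorModel {V1 E1 V E : Type} (H : Multigraph V1 E1) (G : Multigraph V E) where
  vmap : V1 → V
  vmap_inj : Function.Injective vmap
  src : E1 → V1
  tgt : E1 → V1
  ends_eq : ∀ e, H.ends e = s(src e, tgt e)
  path : ∀ e, G.Walk (vmap (src e)) (vmap (tgt e))
  path_isPath : ∀ e, (path e).IsPath
  internal_disjoint : ∀ e₁ e₂, e₁ ≠ e₂ → ∀ x, x ∈ (path e₁).interior → x ∉ (path e₂).support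
  internal_avoid : ∀ (e : E1) (x : V1), vmap x ∉ (path e).interior

end Multigraph

section Walls

/-- The `m × n` grid graph. -/
def gridGraph (m n : ℕ) : SimpleGraph (Fin m × Fin n) where
  Adj p q := (p.1 = q.1 ∧ (p.2.val + 1 = q.2.val ∨ q.2.val + 1 = p.2.val)) ∨
             (p.2 = q.2 ∧ (p.1.val + 1 = q.1.val ∨ q.1.val + 1 = p.1.val))
  symm := ⟨by rintro p q (⟨h, h'⟩ | ⟨h, h'⟩) <;> [left; right] <;> exact ⟨h.symm, h'.symm⟩⟩
  loopless := ⟨by rintro p (⟨-, h | h⟩ | ⟨-, h | h⟩) <;> omega⟩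

/-- The `k×k` grid `Γ_k` as a multigraph. -/
def Gamma (k : ℕ) : Multigraph (Fin k × Fin k) (gridGraph k k).edgeSet :=
  Multigraph.ofSimple (gridGraph k k)

/-- The `(k+1) × (2k+2)` grid with the vertical edges `{(x,y),(x+1,y)}` with `x+y` odd
(in 1-indexed coordinates) removed. -/
def wallPre (k : ℕ) : SimpleGraph (Fin (k + 1) × Fin (2 * k + 2)) where
  Adj p q := (gridGraph (k + 1) (2 * k + 2)).Adj p q ∧
    ¬ (p.2 = q.2 ∧ (min p.1.val q.1.val + p.2.val) % 2 = 1)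
  symm := ⟨by
    rintro p q ⟨h, h'⟩
    refine ⟨(gridGraph _ _).symm.symm _ _ h, fun ⟨hc, hp⟩ => h' ⟨hc.symm, ?_⟩⟩
    rw [Nat.min_comm] at hp
    rw [← hc]
    exact hp⟩
  loopless := ⟨fun p h => (gridGraph _ _).loopless.irrefl p h.1⟩

/-- Degree of a vertex in `wallPre k`. -/
noncomputable def wallPreDeg (k : ℕ) (v : Fin (k + 1) × Fin (2 * k + 2)) : ℕ :=
  (Finset.univ.filter (fun w => (wallPre k).Adj v w)).card

/-- The vertex set of the `k`-wall: vertices of degree `≠ 1`. -/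
def wallVerts (k : ℕ) : Set (Fin (k + 1) × Fin (2 * k + 2)) :=
  {v | wallPreDeg k v ≠ 1}

/-- The `k`-wall `W_k`, as a simple graph. -/
noncomputable def wallSimple (k : ℕ) : SimpleGraph (wallVerts k) :=
  (wallPre k).induce (wallVerts k)

/-- The `k`-wall `W_k`, as a multigraph. -/
noncomputable def Wall (k : ℕ) : Multigraph (wallVerts k) (wallSimple k).edgeSet :=
  Multigraph.ofSimple (wallSimple k)

/-- The doubled edges of `W⁺_k`: the horizontal edges lying on both a vertical and a
horizontal path of the wall, i.e. those whose lower column index is odd (1-indexed). -/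
def isDoubledEdge (k : ℕ) (p : Sym2 (wallVerts k)) : Prop :=
  ∃ a b : wallVerts k, p = s(a, b) ∧ (a : Fin (k + 1) × Fin (2 * k + 2)).1 = (b : Fin (k + 1) × Fin (2 * k + 2)).1 ∧
    (b : Fin (k + 1) × Fin (2 * k + 2)).2.val = (a : Fin (k + 1) × Fin (2 * k + 2)).2.val + 1 ∧
    (a : Fin (k + 1) × Fin (2 * k + 2)).2.val % 2 = 0

/-- `W⁺_k`: the `k`-wall with a second parallel copy of every doubled edge. -/
noncomputable def WallPlus (k : ℕ) :
    Multigraph (wallVerts k)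
      ((wallSimple k).edgeSet ⊕ {p : Sym2 (wallVerts k) // p ∈ (wallSimple k).edgeSet ∧ isDoubledEdge k p}) where
  ends
    | .inl e => e.1
    | .inr e => e.1
  loopless := by
    rintro (e | e)
    · exact (wallSimple k).not_isDiag_of_mem_edgeSet e.2
    · exact (wallSimple k).not_isDiag_of_mem_edgeSet e.2.1

end Walls

namespace Multigraph

variable {V E : Type}

/-- Tree-partition width of a multigraph (bags may be empty; w.l.o.g. bags are
indexed by the vertices themselves). -/
noncomputable def tpw (G : Multigraph V E) [Fintype V] [Fintype E] : ℕ :=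
  sInf {w | ∃ T : SimpleGraph V, T.IsTree ∧ ∃ bag : V → V,
    (Fintype.card V = 1 ∨
      ∀ (e : E) (a b : V), G.ends e = s(a, b) → bag a = bag b ∨ T.Adj (bag a) (bag b)) ∧
    (∀ t : V, (Finset.univ.filter (fun v => bag v = t)).card ≤ w) ∧
    (∀ t t' : V, T.Adj t t' →
      (Finset.univ.filter (fun e : E =>
        ∃ a b, G.ends e = s(a, b) ∧ bag a = t ∧ bag b = t')).card ≤ w)}

section ThreeCenter

variable {W : Type} [Fintype W]

/-- Degree of `v` in the state `(A, m)`: `A` is the set of remaining vertices and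
`m` gives edge multiplicities. -/
noncomputable def stDeg (A : Finset W) (m : Sym2 W → ℕ) (v : W) : ℕ :=
  ∑ w ∈ A.erase v, m s(v, w)

/-- One reduction step of the 3-center construction relative to the marked set `X`:
delete a vertex of degree one, or suppress (dissolve) a vertex of degree two not in `X`. -/
inductive CStep (X : Set W) :
    Finset W × (Sym2 W → ℕ) → Finset W × (Sym2 W → ℕ) → Prop
  | delete (A : Finset W) (m : Sym2 W → ℕ) (v : W) (hv : v ∈ A) (hd : stDeg A m v = 1) :
      CStep X (A, m) (A.erase v, fun p => if v ∈ p then 0 else m p)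
  | suppress (A : Finset W) (m : Sym2 W → ℕ) (v a b : W) (hv : v ∈ A) (hx : v ∉ X)
      (ha : a ∈ A) (hb : b ∈ A) (hav : a ≠ v) (hbv : b ≠ v) (hd : stDeg A m v = 2)
      (h1 : 1 ≤ m s(v, a)) (h2 : a = b → m s(v, a) = 2) (h3 : a ≠ b → 1 ≤ m s(v, b)) :
      CStep X (A, m) (A.erase v,
        fun p => if v ∈ p then 0 else if a ≠ b ∧ p = s(a, b) then m p + 1 else m p)

/-- The number of vertices of the 3-center of the marked multigraph given by the
state `(A, m)` with marked set `X`: the size of a reduct on which no step applies. -/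
noncomputable def centerSize (X : Set W) (A : Finset W) (m : Sym2 W → ℕ) : ℕ :=
  sInf {c | ∃ s : Finset W × (Sym2 W → ℕ),
    Relation.ReflTransGen (CStep X) (A, m) s ∧ (∀ s', ¬ CStep X s s') ∧ s.1.card = c}

end ThreeCenter

section TCW

variable {n : ℕ}

/-- The consolidation map for the torso at node `t` of a tree-cut decomposition:
a vertex whose bag is `t` is kept, and any other vertex is sent to the peripheral
vertex indexed by the neighbour `u` of `t` whose branch contains its bag. -/
noncomputable def consMap (T : SimpleGraph (Fin n)) (bag : V → Fin n) (t : Fin n) (a : V) :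
    V ⊕ Fin n :=
  if bag a = t then Sum.inl a
  else if h : ∃ u, T.Adj t u ∧ (T.deleteEdges {s(t, u)}).Reachable (bag a) u
    then Sum.inr h.choose else Sum.inl a

/-- The vertex set of the torso at `t`: the bag of `t` together with one peripheral
vertex for each neighbour of `t` in the decomposition tree. -/
noncomputable def torsoA [Fintype V] (T : SimpleGraph (Fin n)) (bag : V → Fin n) (t : Fin n) :
    Finset (V ⊕ Fin n) :=
  (Finset.univ.filter (fun a : V => bag a = t)).image Sum.inl ∪
    (Finset.univ.filter (fun u : Fin n => T.Adj t u)).image Sum.inr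

/-- The edge multiplicities of the torso at `t`. -/
noncomputable def torsoM (G : Multigraph V E) [Fintype E] (T : SimpleGraph (Fin n))
    (bag : V → Fin n) (t : Fin n) : Sym2 (V ⊕ Fin n) → ℕ :=
  fun p => if p.IsDiag then 0
    else (Finset.univ.filter (fun e : E => (G.ends e).map (consMap T bag t) = p)).card

/-- The adhesion of the tree edge `{t, t'}`: the number of edges of `G` whose endpoints
lie in bags on different sides of the edge. -/
noncomputable def adhE (G : Multigraph V E) [Fintype E] (T : SimpleGraph (Fin n))
    (bag : V → Fin n) (t t' : Fin n) : ℕ :=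
  (Finset.univ.filter (fun e : E => ∃ a b, G.ends e = s(a, b) ∧
    (T.deleteEdges {s(t, t')}).Reachable (bag a) t ∧
    (T.deleteEdges {s(t, t')}).Reachable (bag b) t')).card

/-- Tree-cut width of a multigraph: the minimum, over tree-cut decompositions, of
the maximum of all adhesions and of the numbers of vertices of the 3-centers
of the torsos. -/
noncomputable def tcw (G : Multigraph V E) [Fintype V] [Fintype E] : ℕ :=
  sInf {w | ∃ (n : ℕ) (T : SimpleGraph (Fin n)), T.IsTree ∧ ∃ bag : V → Fin n,
    (∀ t t', T.Adj t t' → adhE G T bag t t' ≤ w) ∧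
    (∀ t, centerSize (Sum.inl '' {a | bag a = t}) (torsoA T bag t) (torsoM G T bag t) ≤ w)}

end TCW

end Multigraph

/-!
A branch vertex `x` is an end of at least three edges of `H`; the first or last edges of
their edge-disjoint paths are distinct edges at the image of `x`, whereas a subdivision
vertex lies on only two edges. So all branch vertices lie in `G`. The inner vertices of a
subdivided edge have no other edges, so a path of the subdivision between two vertices of
`G` that enters a subdivided edge runs through all of it; the path therefore projects to a
walk of `G` each of whose edges has its whole subdivision used by the path. Conversely, a
walk of `G` lifts edge by edge. Walks are enough on both sides, because shortcutting a
walk to a path only drops edges.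
-/

namespace Multigraph

variable {V E V' E' V1 E1 : Type}

namespace Walk

variable {G : Multigraph V E} {u v w : V}

theorem start_mem_support (p : G.Walk u v) : u ∈ p.support := by
  cases p <;> simp [support]

def copy (p : G.Walk u v) {u' v' : V} (hu : u = u') (hv : v = v') : G.Walk u' v' :=
  hu ▸ hv ▸ p

@[simp] theorem support_copy (p : G.Walk u v) {u' v' : V} (hu : u = u') (hv : v = v') :
    (p.copy hu hv).support = p.support := by
  subst hu hv; rfl

@[simp] theorem edges_copy (p : G.Walk u v) {u' v' : V} (hu : u = u') (hv : v = v') :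
    (p.copy hu hv).edges = p.edges := by
  subst hu hv; rfl

def append : {u v w : V} → G.Walk u v → G.Walk v w → G.Walk u w
  | _, _, _, .nil _, q => q
  | _, _, _, .cons e he p, q => .cons e he (p.append q)

@[simp] theorem edges_append (p : G.Walk u v) (q : G.Walk v w) :
    (p.append q).edges = p.edges ++ q.edges := by
  induction p with
  | nil => rfl
  | cons e he p ih => simp [append, edges, ih]

theorem exists_mem_edges_start_mem_ends (p : G.Walk u v) (h : u ≠ v) :
    ∃ x ∈ p.edges, u ∈ G.ends x := by
  cases p with
  | nil => exact absurd rfl h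
  | cons e he p => exact ⟨e, by simp [edges], by simp [he]⟩

theorem exists_mem_edges_end_mem_ends (p : G.Walk u v) (h : u ≠ v) :
    ∃ x ∈ p.edges, v ∈ G.ends x := by
  induction p with
  | nil => exact absurd rfl h
  | @cons u v' w e he p ih =>
    by_cases hv : v' = w
    · subst hv
      exact ⟨e, by simp [edges], by simp [he]⟩
    · obtain ⟨x, hx, hvx⟩ := ih hv
      exact ⟨x, by simp [edges, hx], hvx⟩

theorem exists_suffix_of_mem_support (p : G.Walk u w) (hv : v ∈ p.support) :
    ∃ s : G.Walk v w, s.support.Sublist p.support ∧ s.edges ⊆ p.edges := by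
  induction p with
  | nil =>
    obtain rfl : v = _ := by simpa [support] using hv
    exact ⟨.nil _, .refl _, fun _ h => h⟩
  | cons e he p ih =>
    rcases List.mem_cons.1 hv with rfl | hv
    · exact ⟨.cons e he p, .refl _, fun _ h => h⟩
    · obtain ⟨s, hs, hse⟩ := ih hv
      exact ⟨s, hs.cons _, fun x hx => List.mem_cons_of_mem _ (hse hx)⟩

theorem exists_isPath_edges_subset (p : G.Walk u w) :
    ∃ q : G.Walk u w, q.IsPath ∧ q.edges ⊆ p.edges := by
  induction p with
  | nil => exact ⟨.nil _, by simp [IsPath, support], fun _ h => h⟩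
  | @cons u v w e he p ih =>
    obtain ⟨q, hq, hqe⟩ := ih
    by_cases hu : u ∈ q.support
    · obtain ⟨s, hs, hse⟩ := q.exists_suffix_of_mem_support hu
      exact ⟨s, hs.nodup hq, fun x hx => List.mem_cons_of_mem _ (hqe (hse hx))⟩
    · refine ⟨.cons e he q, List.nodup_cons.2 ⟨hu, hq⟩, ?_⟩
      exact List.cons_subset_cons _ hqe

end Walk

/-- `P 0, X 0, P 1, …, X N, P (N + 1)` is a walk whose inner vertices `P 1, …, P N` are
incident with no edges other than their two walk edges. -/
structure IsBarePath (G : Multigraph V E) (P : ℕ → V) (X : ℕ → E) (N : ℕ) : Prop where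
  ends_eq : ∀ k ≤ N, G.ends (X k) = s(P k, P (k + 1))
  eq_of_mem_ends : ∀ k, 1 ≤ k → k ≤ N → ∀ x, P k ∈ G.ends x → x = X (k - 1) ∨ x = X k

namespace IsBarePath

variable {G : Multigraph V E} {P : ℕ → V} {X : ℕ → E} {N : ℕ}

theorem reverse (h : IsBarePath G P X N) :
    IsBarePath G (fun k => P (N + 1 - k)) (fun k => X (N - k)) N where
  ends_eq k hk := by
    rw [h.ends_eq _ (by omega), Sym2.eq_swap, show N - k + 1 = N + 1 - k by omega,
      show N + 1 - (k + 1) = N - k by omega]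
  eq_of_mem_ends k hk₁ hk₂ x hx := by
    rcases h.eq_of_mem_ends (N + 1 - k) (by omega) (by omega) x hx with h' | h'
    · exact .inr (by rw [h']; congr 1; omega)
    · exact .inl (by rw [h']; congr 1; omega)

theorem exists_walk (h : IsBarePath G P X N) :
    ∃ p : G.Walk (P 0) (P (N + 1)), ∀ x ∈ p.edges, ∃ k ≤ N, X k = x := by
  suffices ∀ m k, k + m = N + 1 →
      ∃ p : G.Walk (P k) (P (N + 1)), ∀ x ∈ p.edges, ∃ k ≤ N, X k = x from
    this _ 0 (zero_add _)
  intro m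
  induction m with
  | zero =>
    rintro k rfl
    exact ⟨.nil _, by simp [Walk.edges]⟩
  | succ m ih =>
    intro k hk
    obtain ⟨p, hp⟩ := ih (k + 1) (by omega)
    refine ⟨.cons (X k) (h.ends_eq k (by omega)) p, ?_⟩
    simp only [Walk.edges, List.mem_cons, forall_eq_or_imp]
    exact ⟨⟨k, by omega, rfl⟩, hp⟩

/-- Since the inner vertices have no further edges, a path entering at `P k` from `P (k - 1)`
can neither turn back nor leave early. -/
theorem exists_suffix (h : IsBarePath G P X N) {w : V} (hw : ∀ k, 1 ≤ k → k ≤ N → P k ≠ w) :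
    ∀ {u} (p : G.Walk u w) {k}, u = P k → 1 ≤ k → k ≤ N + 1 → p.IsPath →
      P (k - 1) ∉ p.support →
      ∃ s : G.Walk (P (N + 1)) w, s.support.Sublist p.support ∧ s.edges ⊆ p.edges ∧
        ∀ j, k ≤ j → j ≤ N → X j ∈ p.edges := by
  intro u p
  revert hw
  induction p with
  | nil =>
    rintro hw k rfl hk₁ hk₂ - -
    obtain rfl : k = N + 1 := by by_contra hk; exact hw k hk₁ (by omega) rfl
    exact ⟨.nil _, .refl _, fun _ h => h, fun j _ _ => by omega⟩
  | @cons u v w' x hx p ih =>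
    rintro hw k rfl hk₁ hk₂ hp hprev
    by_cases hkN : k = N + 1
    · subst hkN
      exact ⟨.cons x hx p, .refl _, fun _ h => h, fun j _ _ => by omega⟩
    have hpath := List.nodup_cons.1 hp
    rcases h.eq_of_mem_ends k hk₁ (by omega) x (by simp [hx]) with rfl | rfl
    · rw [h.ends_eq _ (by omega), Sym2.eq_swap, show k - 1 + 1 = k by omega,
        Sym2.congr_right] at hx
      exact absurd (hx ▸ p.start_mem_support) (fun h' => hprev (List.mem_cons_of_mem _ h'))
    · rw [h.ends_eq _ (by omega), Sym2.congr_right] at hx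
      obtain ⟨s, hs, hse, hX⟩ := ih hw hx.symm (by omega) (by omega) hpath.2 hpath.1
      refine ⟨s, hs.cons _, fun y hy => List.mem_cons_of_mem _ (hse hy), fun j hj₁ hj₂ => ?_⟩
      rcases hj₁.eq_or_lt with rfl | hj₁
      · exact List.mem_cons_self
      · exact List.mem_cons_of_mem _ (hX j hj₁ hj₂)

end IsBarePath

namespace ImmersionModel

variable {H : Multigraph V1 E1} {G : Multigraph V E}

theorem vmap_src_ne_vmap_tgt (m : ImmersionModel H G) (f : E1) :
    m.vmap (m.src f) ≠ m.vmap (m.tgt f) :=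
  m.vmap_inj.ne fun h => H.loopless f (by rw [m.ends_eq f, h]; exact Sym2.mk_isDiag_iff.2 rfl)

theorem mdeg_le_card [Fintype E1] (m : ImmersionModel H G) (x : V1) {s : Finset E}
    (hs : ∀ q, m.vmap x ∈ G.ends q → q ∈ s) : H.mdeg x ≤ s.card := by
  refine Finset.card_le_card_of_forall_subsingleton
    (fun f q => q ∈ (m.path f).edges ∧ m.vmap x ∈ G.ends q) (fun f hf => ?_) ?_
  · have hx : x = m.src f ∨ x = m.tgt f := by
      simpa [m.ends_eq f] using (Finset.mem_filter.1 hf).2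
    obtain ⟨q, hq, hxq⟩ : ∃ q ∈ (m.path f).edges, m.vmap x ∈ G.ends q := by
      rcases hx with rfl | rfl
      · exact (m.path f).exists_mem_edges_start_mem_ends (m.vmap_src_ne_vmap_tgt f)
      · exact (m.path f).exists_mem_edges_end_mem_ends (m.vmap_src_ne_vmap_tgt f)
    exact ⟨q, hs q hxq, hq, hxq⟩
  · intro q _ f₁ hf₁ f₂ hf₂
    by_contra hne
    exact m.edge_disjoint f₁ f₂ hne q hf₁.2.1 hf₂.2.1

theorem immersed_of_walks {G' : Multigraph V' E'} (m : ImmersionModel H G) (φ : V1 → V')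
    (hφ : Function.Injective φ) (g : E' → E)
    (hwalk : ∀ f, ∃ p : G'.Walk (φ (m.src f)) (φ (m.tgt f)),
      ∀ y ∈ p.edges, g y ∈ (m.path f).edges) :
    Immersed H G' := by
  have hpath : ∀ f, ∃ q : G'.Walk (φ (m.src f)) (φ (m.tgt f)),
      q.IsPath ∧ ∀ y ∈ q.edges, g y ∈ (m.path f).edges := by
    intro f
    obtain ⟨p, hp⟩ := hwalk f
    obtain ⟨q, hq, hqp⟩ := p.exists_isPath_edges_subset
    exact ⟨q, hq, fun y hy => hp y (hqp hy)⟩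
  choose p hp using hpath
  exact ⟨{ vmap := φ
           vmap_inj := hφ
           src := m.src
           tgt := m.tgt
           ends_eq := m.ends_eq
           path := p
           path_isPath := fun f => (hp f).1
           edge_disjoint := fun f₁ f₂ hne y hy₁ hy₂ =>
             m.edge_disjoint f₁ f₂ hne (g y) ((hp f₁).2 y hy₁) ((hp f₂).2 y hy₂) }⟩

end ImmersionModel

/-- The vertex at position `k` along the subdivided edge `e`, running from `src e` at `k = 0`
to `tgt e` at `k = n e + 1`. -/
def subdivVert (src tgt : E → V) (n : E → ℕ) (e : E) (k : ℕ) : V ⊕ Σ e : E, Fin (n e) :=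
  if _ : k = 0 then .inl (src e)
  else if _ : k ≤ n e then .inr ⟨e, ⟨k - 1, by omega⟩⟩
  else .inl (tgt e)

variable {G : Multigraph V E} {src tgt : E → V} {hst : ∀ e, G.ends e = s(src e, tgt e)}
  {n : E → ℕ}

theorem subdivide_ends_mk (e : E) (j : Fin (n e + 1)) :
    (G.subdivide src tgt hst n).ends ⟨e, j⟩ =
      s(subdivVert src tgt n e j, subdivVert src tgt n e (j + 1 : ℕ)) := by
  have := j.isLt
  simp only [subdivide, subdivVert]
  congr 1 <;> split_ifs <;> simp_all; omega

theorem mem_subdivide_ends_inr {e : E} {i : Fin (n e)} {x : Σ e, Fin (n e + 1)}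
    (h : .inr ⟨e, i⟩ ∈ (G.subdivide src tgt hst n).ends x) :
    x = ⟨e, i.castSucc⟩ ∨ x = ⟨e, i.succ⟩ := by
  obtain ⟨e', j⟩ := x
  rw [subdivide_ends_mk, Sym2.mem_iff] at h
  unfold subdivVert at h
  rcases h with h | h <;> split_ifs at h <;>
    obtain ⟨rfl, h⟩ := Sigma.mk.inj_iff.1 (Sum.inr.inj h) <;>
    simp [Fin.ext_iff] at h ⊢ <;> omega

theorem mem_subdivide_ends_inl {a : V} {x : Σ e, Fin (n e + 1)}
    (h : .inl a ∈ (G.subdivide src tgt hst n).ends x) :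
    ((x.2 : ℕ) = 0 ∧ a = src x.1) ∨ ((x.2 : ℕ) = n x.1 ∧ a = tgt x.1) := by
  obtain ⟨e, j⟩ := x
  have := j.isLt
  dsimp only
  rw [subdivide_ends_mk, Sym2.mem_iff] at h
  unfold subdivVert at h
  rcases h with h | h <;> split_ifs at h <;> first
    | contradiction
    | (obtain rfl := Sum.inl.inj h; refine .inl ⟨?_, rfl⟩; omega)
    | (obtain rfl := Sum.inl.inj h; refine .inr ⟨?_, rfl⟩; omega)

theorem subdivVert_zero (e : E) : subdivVert src tgt n e 0 = .inl (src e) := rfl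

theorem subdivVert_last (e : E) : subdivVert src tgt n e (n e + 1) = .inl (tgt e) := by
  simp [subdivVert]

theorem subdivVert_ne_inl {e : E} {k : ℕ} (h₁ : 1 ≤ k) (h₂ : k ≤ n e) (b : V) :
    subdivVert src tgt n e k ≠ .inl b := by
  simp [subdivVert, dif_neg (show k ≠ 0 by omega), h₂]

theorem isBarePath_subdivVert (e : E) :
    IsBarePath (G.subdivide src tgt hst n) (subdivVert src tgt n e)
      (fun k => ⟨e, Fin.ofNat _ k⟩) (n e) where
  ends_eq k hk := by
    rw [subdivide_ends_mk, Fin.val_ofNat, Nat.mod_eq_of_lt (by omega)]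
  eq_of_mem_ends k hk₁ hk₂ x hx := by
    rw [subdivVert, dif_neg (by omega), dif_pos hk₂] at hx
    rcases mem_subdivide_ends_inr hx with rfl | rfl
    · left
      simp [Fin.ext_iff, Nat.mod_eq_of_lt (show k - 1 < n e + 1 by omega)]
    · right
      simp [Fin.ext_iff, Nat.mod_eq_of_lt (show k < n e + 1 by omega)]
      omega

theorem exists_isBarePath_of_inl_mem_ends {a : V} {x : Σ e, Fin (n e + 1)}
    (hx : .inl a ∈ (G.subdivide src tgt hst n).ends x) :
    ∃ c P X, IsBarePath (G.subdivide src tgt hst n) P X (n x.1) ∧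
      P 0 = .inl a ∧ X 0 = x ∧ P (n x.1 + 1) = .inl c ∧ G.ends x.1 = s(a, c) ∧
      (∀ k, 1 ≤ k → k ≤ n x.1 → ∀ b, P k ≠ .inl b) ∧
      (∀ k, (X k).1 = x.1) ∧ ∀ j, ∃ k ≤ n x.1, X k = ⟨x.1, j⟩ := by
  obtain ⟨e, j⟩ := x
  rcases mem_subdivide_ends_inl hx with ⟨hj, rfl⟩ | ⟨hj, rfl⟩ <;> dsimp only at hj ⊢
  · refine ⟨tgt e, _, _, isBarePath_subdivVert e, subdivVert_zero e, ?_, subdivVert_last e,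
      hst e, fun k h₁ h₂ => subdivVert_ne_inl h₁ h₂, fun k => rfl, fun i => ⟨i, by omega, ?_⟩⟩
    · simp [Fin.ext_iff, hj]
    · simp
  · refine ⟨src e, _, _, (isBarePath_subdivVert e).reverse, by simpa using subdivVert_last e, ?_,
      by simpa using subdivVert_zero e, by rw [hst e, Sym2.eq_swap],
      fun k h₁ h₂ => subdivVert_ne_inl (by omega) (by omega), fun k => rfl,
      fun i => ⟨n e - i, by omega, ?_⟩⟩
    · simp [Fin.ext_iff, hj]
    · simp [Fin.ext_iff, Nat.mod_eq_of_lt (show n e - (n e - i) < n e + 1 by omega)]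
      omega

theorem exists_inl_mem_subdivide_ends {e : E} {a c : V} (he : G.ends e = s(a, c)) :
    ∃ j, .inl a ∈ (G.subdivide src tgt hst n).ends ⟨e, j⟩ := by
  have ha : a ∈ s(src e, tgt e) := by rw [← hst e, he]; exact Sym2.mem_mk_left _ _
  rcases Sym2.mem_iff.1 ha with rfl | rfl
  · exact ⟨0, by simp [subdivide_ends_mk, subdivVert_zero]⟩
  · exact ⟨Fin.last _, by simp [subdivide_ends_mk, subdivVert_last]⟩

theorem exists_walk_subdivide {a b : V} (q : G.Walk a b) :
    ∃ p : (G.subdivide src tgt hst n).Walk (.inl a) (.inl b), ∀ y ∈ p.edges, y.1 ∈ q.edges := by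
  induction q with
  | nil => exact ⟨.nil _, by simp [Walk.edges]⟩
  | @cons a c b e he q ih =>
    obtain ⟨p, hp⟩ := ih
    obtain ⟨j, hj⟩ := exists_inl_mem_subdivide_ends (hst := hst) (n := n) he
    obtain ⟨c', P, X, hP, hP0, -, hPN, hends, -, hXfst, -⟩ :=
      exists_isBarePath_of_inl_mem_ends hj
    obtain rfl : c' = c := Sym2.congr_right.1 (hends.symm.trans he)
    obtain ⟨r, hr⟩ := hP.exists_walk
    refine ⟨(r.copy hP0 hPN).append p, fun y hy => ?_⟩
    rw [Walk.edges_append, Walk.edges_copy, List.mem_append] at hy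
    rcases hy with hy | hy
    · obtain ⟨k, -, rfl⟩ := hr y hy
      exact hXfst k ▸ List.mem_cons_self
    · exact List.mem_cons_of_mem _ (hp y hy)

theorem exists_walk_of_subdivide {a b : V}
    (p : (G.subdivide src tgt hst n).Walk (.inl a) (.inl b)) (hp : p.IsPath) :
    ∃ q : G.Walk a b, ∀ e ∈ q.edges, ∀ j, ⟨e, j⟩ ∈ p.edges := by
  induction hlen : p.support.length using Nat.strong_induction_on generalizing a p with
  | _ len ih =>
    cases p with
    | nil => exact ⟨.nil _, by simp [Walk.edges]⟩
    | @cons _ v _ x hx p =>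
      obtain ⟨c, P, X, hP, hP0, hX0, hPN, hends, hinner, -, hXall⟩ :=
        exists_isBarePath_of_inl_mem_ends (by rw [hx]; exact Sym2.mem_mk_left _ _)
      obtain rfl : v = P 1 := by
        rwa [← hX0, hP.ends_eq 0 (Nat.zero_le _), hP0, Sym2.congr_right, eq_comm] at hx
      obtain ⟨hap, hp⟩ := List.nodup_cons.1 hp
      obtain ⟨s, hs, hse, hXp⟩ := hP.exists_suffix (fun k h₁ h₂ => hinner k h₁ h₂ b) p rfl le_rfl
        (by omega) hp (by simpa [hP0] using hap)
      have hshorter : (s.copy hPN rfl).support.length < len := by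
        rw [← hlen, Walk.support_copy]
        exact Nat.lt_succ_of_le hs.length_le
      obtain ⟨q, hq⟩ := ih _ hshorter (s.copy hPN rfl)
        (by simpa [Walk.IsPath] using hs.nodup hp) rfl
      refine ⟨.cons x.1 hends q, ?_⟩
      simp only [Walk.edges, List.mem_cons, forall_eq_or_imp]
      refine ⟨fun j => ?_, fun e he j => .inr (hse (by simpa using hq e he j))⟩
      obtain ⟨k, hk, hXk⟩ := hXall j
      rw [← hXk]
      rcases k.eq_zero_or_pos with rfl | hk₀
      · exact .inl hX0
      · exact .inr (hXp k hk₀ hk)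

theorem ImmersionModel.exists_vmap_eq_inl [Fintype E1] {H : Multigraph V1 E1}
    (m : ImmersionModel H (G.subdivide src tgt hst n)) {x : V1} (hx : 3 ≤ H.mdeg x) :
    ∃ a, m.vmap x = .inl a := by
  rcases hv : m.vmap x with a | ⟨e, i⟩
  · exact ⟨a, rfl⟩
  · have hle := m.mdeg_le_card x (s := {⟨e, i.castSucc⟩, ⟨e, i.succ⟩}) fun q hq => by
      rw [hv] at hq
      simpa using mem_subdivide_ends_inr hq
    have htwo := Finset.card_le_two (a := (⟨e, i.castSucc⟩ : Σ e, Fin (n e + 1))) (b := ⟨e, i.succ⟩)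
    omega

end Multigraph

theorem subdivision_immersion_general {V1 E1 V E : Type} [Fintype E1]
    (H : Multigraph V1 E1) (G : Multigraph V E)
    (hdeg : ∀ x, 3 ≤ H.mdeg x)
    (src tgt : E → V) (hst : ∀ e, G.ends e = s(src e, tgt e)) (n : E → ℕ) :
    (∀ (m : Multigraph.ImmersionModel H (G.subdivide src tgt hst n)) (x : V1),
      ∃ a : V, m.vmap x = Sum.inl a) ∧
    (Multigraph.Immersed H (G.subdivide src tgt hst n) ↔ Multigraph.Immersed H G) := by
  have hbranch (m : Multigraph.ImmersionModel H (G.subdivide src tgt hst n)) (x : V1) :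
      ∃ a : V, m.vmap x = Sum.inl a :=
    m.exists_vmap_eq_inl (hdeg x)
  refine ⟨hbranch, ⟨fun ⟨m⟩ => ?_, fun ⟨m⟩ => ?_⟩⟩
  · choose a ha using hbranch m
    refine m.immersed_of_walks a (fun x y h => m.vmap_inj (by rw [ha, ha, h]))
      (fun e => ⟨e, 0⟩) fun f => ?_
    obtain ⟨q, hq⟩ := Multigraph.exists_walk_of_subdivide ((m.path f).copy (ha _) (ha _))
      (by simpa [Multigraph.Walk.IsPath] using m.path_isPath f)
    exact ⟨q, fun e he => by simpa using hq e he 0⟩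
  · exact m.immersed_of_walks (Sum.inl ∘ m.vmap) (Sum.inl_injective.comp m.vmap_inj) Sigma.fst
      fun f => Multigraph.exists_walk_subdivide (m.path f)

/-- If every vertex of a connected `H` has multidegree at least `3` and `G'`
is a subdivision of `G`, then no branch vertex of an `H`-immersion model in `G'` is a
subdivision vertex, and `G'` contains `H` as an immersion iff `G` does. -/
theorem subdivision_immersion {V1 E1 V E : Type} [Fintype E1]
    (H : Multigraph V1 E1) (G : Multigraph V E)
    (hc : H.Connected) (hdeg : ∀ x, 3 ≤ H.mdeg x)
    (src tgt : E → V) (hst : ∀ e, G.ends e = s(src e, tgt e)) (n : E → ℕ) :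
    (∀ (m : Multigraph.ImmersionModel H (G.subdivide src tgt hst n)) (x : V1),
      ∃ a : V, m.vmap x = Sum.inl a) ∧
    (Multigraph.Immersed H (G.subdivide src tgt hst n) ↔ Multigraph.Immersed H G) :=
  subdivision_immersion_general H G hdeg src tgt hst n
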